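/- For a piecewise causal curve β from p to q and a generalized time function τ: (1) L̂_τ(β) = 0 iff β is trivial (constant); (2) L̂_τ(β) = τ(q) − τ(p) iff β is future causal; (3) L̂_τ(β) ≥ max_{y∈β} τ(y) − min_{x∈β} τ(x) ≥ |τ(q) − τ(p)|. -/

import Mathlib

/-! On each piece of a piecewise causal curve a generalized time function is strictly monotone
along the curve: increasing on future pieces and, after reversing the parametrization, decreasing
on past ones. Hence every summand of the null length is positive and equals the signed increment
of `τ` exactly on future pieces, which gives (1) and, by telescoping, (2). For (3), every value of
`τ` along the curve lies between two break-point values, and the difference of two break-point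
values is at most the sum of the absolute increments between them. -/

noncomputable section

open Set Manifold

namespace NullDist

variable (n : ℕ) (M : Type*) [TopologicalSpace M]
  [ChartedSpace (EuclideanSpace ℝ (Fin (n + 1))) M]
  [IsManifold (𝓡 (n + 1)) (⊤ : ℕ∞) M]

/-- A (time-oriented) Lorentzian metric on the `(n+1)`-manifold `M`:
a symmetric bilinear form of signature `(−,+,⋯,+)` on each tangent space,
together with a continuous future-pointing timelike vector field `T`. -/
structure SpacetimeMetric : Type _ where
  g : ∀ x : M, TangentSpace (𝓡 (n + 1)) x →ₗ[ℝ] TangentSpace (𝓡 (n + 1)) x →ₗ[ℝ] ℝ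
  symm : ∀ x u v, g x u v = g x v u
  lorentz : ∀ x : M, ∃ b : Module.Basis (Fin (n + 1)) ℝ (TangentSpace (𝓡 (n + 1)) x),
    ∀ i j, g x (b i) (b j) = if i = j then (if (i : ℕ) = 0 then (-1 : ℝ) else 1) else 0
  T : ∀ x : M, TangentSpace (𝓡 (n + 1)) x
  T_timelike : ∀ x, g x (T x) (T x) < 0
  T_cont : Continuous fun x : M => (⟨x, T x⟩ : TangentBundle (𝓡 (n + 1)) M)

variable {n M}

/-- The velocity (one-sided at the endpoints) of a curve `γ : [a,b] → M`. -/
def vel (γ : ℝ → M) (a b s : ℝ) : TangentSpace (𝓡 (n + 1)) (γ s) :=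
  mfderivWithin 𝓘(ℝ, ℝ) (𝓡 (n + 1)) γ (Icc a b) s (1 : ℝ)

namespace SpacetimeMetric

variable (L : SpacetimeMetric n M)

/-- `v` is a timelike vector at `x`. -/
def Timelike (x : M) (v : TangentSpace (𝓡 (n + 1)) x) : Prop := L.g x v v < 0

/-- `v` is a future-pointing causal vector at `x` (the zero vector is allowed,
so that trivial curves count as causal). -/
def FutureVec (x : M) (v : TangentSpace (𝓡 (n + 1)) x) : Prop :=
  L.g x v v ≤ 0 ∧ (v = 0 ∨ L.g x (L.T x) v < 0)

/-- `v` is a past-pointing causal vector at `x`. -/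
def PastVec (x : M) (v : TangentSpace (𝓡 (n + 1)) x) : Prop := L.FutureVec x (-v)

/-- `v` is a future-pointing timelike vector at `x`. -/
def FutureTimelikeVec (x : M) (v : TangentSpace (𝓡 (n + 1)) x) : Prop :=
  L.g x v v < 0 ∧ L.g x (L.T x) v < 0

/-- `v` is a past-pointing timelike vector at `x`. -/
def PastTimelikeVec (x : M) (v : TangentSpace (𝓡 (n + 1)) x) : Prop :=
  L.FutureTimelikeVec x (-v)

/-- `γ` is a smooth future-directed causal curve on `[a,b]`. -/
def FutureCausalOn (γ : ℝ → M) (a b : ℝ) : Prop :=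
  ContMDiffOn 𝓘(ℝ, ℝ) (𝓡 (n + 1)) (⊤ : ℕ∞) γ (Icc a b) ∧
  ∀ s ∈ Icc a b, L.FutureVec (γ s) (vel γ a b s)

/-- `γ` is a smooth past-directed causal curve on `[a,b]`. -/
def PastCausalOn (γ : ℝ → M) (a b : ℝ) : Prop :=
  ContMDiffOn 𝓘(ℝ, ℝ) (𝓡 (n + 1)) (⊤ : ℕ∞) γ (Icc a b) ∧
  ∀ s ∈ Icc a b, L.PastVec (γ s) (vel γ a b s)

/-- `γ` is a smooth future-directed timelike curve on `[a,b]`. -/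
def FutureTimelikeOn (γ : ℝ → M) (a b : ℝ) : Prop :=
  ContMDiffOn 𝓘(ℝ, ℝ) (𝓡 (n + 1)) (⊤ : ℕ∞) γ (Icc a b) ∧
  ∀ s ∈ Icc a b, L.FutureTimelikeVec (γ s) (vel γ a b s)

/-- `γ` is a smooth past-directed timelike curve on `[a,b]`. -/
def PastTimelikeOn (γ : ℝ → M) (a b : ℝ) : Prop :=
  ContMDiffOn 𝓘(ℝ, ℝ) (𝓡 (n + 1)) (⊤ : ℕ∞) γ (Icc a b) ∧
  ∀ s ∈ Icc a b, L.PastTimelikeVec (γ s) (vel γ a b s)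

/-- The causal relation `p ≤ q`, i.e. `q ∈ J⁺(p)`. -/
def CausalLE (p q : M) : Prop :=
  ∃ γ a b, a ≤ b ∧ L.FutureCausalOn γ a b ∧ γ a = p ∧ γ b = q

/-- The chronological relation `p ≪ q`, i.e. `q ∈ I⁺(p)`. -/
def ChronLT (p q : M) : Prop :=
  ∃ γ a b, a < b ∧ L.FutureTimelikeOn γ a b ∧ γ a = p ∧ γ b = q

/-- `τ` is a generalized time function: it is nondecreasing along future causal
curves and strictly increasing along nontrivial (regular) future causal curves. -/
def IsGenTime (τ : M → ℝ) : Prop :=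
  (∀ γ a b, L.FutureCausalOn γ a b → MonotoneOn (τ ∘ γ) (Icc a b)) ∧
  (∀ γ a b, L.FutureCausalOn γ a b → (∀ s ∈ Icc a b, vel (n := n) γ a b s ≠ 0) →
    StrictMonoOn (τ ∘ γ) (Icc a b))

/-- A piecewise causal structure on the curve `γ : [a,b] → M`: break points
`s 0 = a < s 1 < ⋯ < s k = b` such that on each subinterval `γ` is a smooth,
regular, future or past directed causal curve.  (For `k = 0` this is the
trivial curve.) -/
structure PWC (γ : ℝ → M) (a b : ℝ) : Type _ where
  k : ℕ
  s : ℕ → ℝ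
  mono : ∀ i < k, s i < s (i + 1)
  first : s 0 = a
  last : s k = b
  causal : ∀ i < k,
    L.FutureCausalOn γ (s i) (s (i + 1)) ∨ L.PastCausalOn γ (s i) (s (i + 1))
  regular : ∀ i < k, ∀ u ∈ Icc (s i) (s (i + 1)), vel (n := n) γ (s i) (s (i + 1)) u ≠ 0

/-- The null length of a piecewise causal curve: the sum of the absolute changes
of `τ` along the causal pieces. -/
def nullLength (τ : M → ℝ) {γ : ℝ → M} {a b : ℝ} (P : L.PWC γ a b) : ℝ :=
  ∑ i ∈ Finset.range P.k, |τ (γ (P.s (i + 1))) - τ (γ (P.s i))|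

/-- The null distance induced by `τ`: the infimum of the null lengths of
piecewise causal curves from `p` to `q`. -/
def nullDist (τ : M → ℝ) (p q : M) : ℝ :=
  sInf {r | ∃ (γ : ℝ → M) (a b : ℝ) (P : L.PWC γ a b),
    γ a = p ∧ γ b = q ∧ r = L.nullLength τ P}

end SpacetimeMetric

end NullDist

section Telescoping

variable {m : ℕ → ℝ} {k : ℕ}

theorem sum_range_abs_sub_eq_zero_iff :
    ∑ i ∈ Finset.range k, |m (i + 1) - m i| = 0 ↔ ∀ i < k, m (i + 1) = m i := by
  simp [Finset.sum_eq_zero_iff_of_nonneg (fun i _ => abs_nonneg (m (i + 1) - m i)),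
    sub_eq_zero]

theorem sum_range_abs_sub_eq_sub_iff :
    ∑ i ∈ Finset.range k, |m (i + 1) - m i| = m k - m 0 ↔ ∀ i < k, m i ≤ m (i + 1) := by
  rw [← Finset.sum_range_sub, ← sub_eq_zero, ← Finset.sum_sub_distrib,
    Finset.sum_eq_zero_iff_of_nonneg (fun i _ => sub_nonneg.2 (le_abs_self _))]
  simp [sub_eq_zero, abs_eq_self]

theorem abs_sub_le_sum_range_abs_sub {i l : ℕ} (hi : i ≤ k) (hl : l ≤ k) :
    |m l - m i| ≤ ∑ j ∈ Finset.range k, |m (j + 1) - m j| := by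
  wlog hil : i ≤ l generalizing i l
  · rw [abs_sub_comm]; exact this hl hi (le_of_not_ge hil)
  calc |m l - m i| = dist (m i) (m l) := by rw [Real.dist_eq, abs_sub_comm]
    _ ≤ ∑ j ∈ Finset.Ico i l, dist (m j) (m (j + 1)) := dist_le_Ico_sum_dist m hil
    _ ≤ ∑ j ∈ Finset.range k, dist (m j) (m (j + 1)) :=
        Finset.sum_le_sum_of_subset_of_nonneg
          (fun j hj => Finset.mem_range.2 ((Finset.mem_Ico.1 hj).2.trans_le hl))
          (fun _ _ _ => dist_nonneg)
    _ = ∑ j ∈ Finset.range k, |m (j + 1) - m j| := by simp only [Real.dist_eq, abs_sub_comm]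

end Telescoping

section PiecewiseMonotone

variable {f : ℝ → ℝ} {s : ℕ → ℝ}

theorem exists_le_apply_le_of_piecewise_monotone {k : ℕ} (hs : ∀ i < k, s i ≤ s (i + 1))
    (hf : ∀ i < k, MonotoneOn f (Icc (s i) (s (i + 1))) ∨ AntitoneOn f (Icc (s i) (s (i + 1))))
    {u : ℝ} (hu : u ∈ Icc (s 0) (s k)) :
    ∃ i ≤ k, ∃ l ≤ k, f (s l) ≤ f u ∧ f u ≤ f (s i) := by
  induction k with
  | zero => exact ⟨0, le_rfl, 0, le_rfl, by rw [le_antisymm hu.2 hu.1]; simp⟩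
  | succ k ih =>
    by_cases hle : u ≤ s k
    · obtain ⟨i, hi, l, hl, h⟩ := ih (fun i hi => hs i (by omega))
        (fun i hi => hf i (by omega)) ⟨hu.1, hle⟩
      exact ⟨i, by omega, l, by omega, h⟩
    · have hu' : u ∈ Icc (s k) (s (k + 1)) := ⟨(not_le.1 hle).le, hu.2⟩
      have hleft : s k ∈ Icc (s k) (s (k + 1)) := left_mem_Icc.2 (hs k k.lt_succ_self)
      have hright : s (k + 1) ∈ Icc (s k) (s (k + 1)) := right_mem_Icc.2 (hs k k.lt_succ_self)
      rcases hf k k.lt_succ_self with hmono | hanti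
      · exact ⟨k + 1, le_rfl, k, k.le_succ, hmono hleft hu' hu'.1, hmono hu' hright hu'.2⟩
      · exact ⟨k, k.le_succ, k + 1, le_rfl, hanti hu' hright hu'.2, hanti hleft hu' hu'.1⟩

theorem sub_le_sum_range_abs_sub_of_piecewise_monotone {k : ℕ} (hs : ∀ i < k, s i ≤ s (i + 1))
    (hf : ∀ i < k, MonotoneOn f (Icc (s i) (s (i + 1))) ∨ AntitoneOn f (Icc (s i) (s (i + 1))))
    {u v : ℝ} (hu : u ∈ Icc (s 0) (s k)) (hv : v ∈ Icc (s 0) (s k)) :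
    f u - f v ≤ ∑ j ∈ Finset.range k, |f (s (j + 1)) - f (s j)| := by
  obtain ⟨i, hi, -, -, -, hui⟩ := exists_le_apply_le_of_piecewise_monotone hs hf hu
  obtain ⟨-, -, l, hl, hlv, -⟩ := exists_le_apply_le_of_piecewise_monotone hs hf hv
  calc f u - f v ≤ |f (s i) - f (s l)| := (sub_le_sub hui hlv).trans (le_abs_self _)
    _ ≤ _ := abs_sub_le_sum_range_abs_sub (m := fun j => f (s j)) hl hi

end PiecewiseMonotone

theorem reflect_mem_Icc {c d t : ℝ} (ht : t ∈ Icc c d) : c + d - t ∈ Icc c d :=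
  ⟨by linarith [ht.2], by linarith [ht.1]⟩

namespace NullDist

section Reflection

variable {n : ℕ} {M : Type*} [TopologicalSpace M]
  [ChartedSpace (EuclideanSpace ℝ (Fin (n + 1))) M]

theorem vel_comp_reflect {γ : ℝ → M} {c d t : ℝ} (hcd : c < d)
    (hγ : MDifferentiableOn 𝓘(ℝ, ℝ) (𝓡 (n + 1)) γ (Icc c d)) (ht : t ∈ Icc c d) :
    vel (n := n) (γ ∘ fun u => c + d - u) c d t = -vel (n := n) γ c d (c + d - t) := by
  have hmaps : MapsTo (fun u => c + d - u) (Icc c d) (Icc c d) := fun _ => reflect_mem_Icc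
  have hreflect : HasMFDerivWithinAt 𝓘(ℝ, ℝ) 𝓘(ℝ, ℝ) (fun u => c + d - u) (Icc c d) t
      (-ContinuousLinearMap.id ℝ ℝ) :=
    ((hasFDerivAt_id t).const_sub (c + d)).hasFDerivWithinAt.hasMFDerivWithinAt
  have := (hγ _ (hmaps ht)).hasMFDerivWithinAt.comp t hreflect hmaps
  rw [vel, this.mfderivWithin ((uniqueDiffOn_Icc hcd).uniqueMDiffOn t ht)]
  exact map_neg (mfderivWithin 𝓘(ℝ, ℝ) (𝓡 (n + 1)) γ (Icc c d) (c + d - t)) 1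

end Reflection

namespace SpacetimeMetric

variable {n : ℕ} {M : Type*} [TopologicalSpace M]
  [ChartedSpace (EuclideanSpace ℝ (Fin (n + 1))) M]
  [IsManifold (𝓡 (n + 1)) (⊤ : ℕ∞) M]
  {L : SpacetimeMetric n M} {τ : M → ℝ} {γ : ℝ → M}

theorem PastCausalOn.futureCausalOn_comp_reflect {c d : ℝ} (hcd : c < d)
    (h : L.PastCausalOn γ c d) : L.FutureCausalOn (γ ∘ fun u => c + d - u) c d := by
  have hreflect : ContMDiff 𝓘(ℝ, ℝ) 𝓘(ℝ, ℝ) (⊤ : ℕ∞) fun u : ℝ => c + d - u :=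
    contMDiff_iff_contDiff.2 (contDiff_const.sub contDiff_id)
  refine ⟨h.1.comp hreflect.contMDiffOn fun _ => reflect_mem_Icc, fun t ht => ?_⟩
  rw [vel_comp_reflect hcd (h.1.mdifferentiableOn (by simp)) ht]
  exact h.2 _ (reflect_mem_Icc ht)

theorem IsGenTime.strictAntiOn_of_pastCausalOn (hτ : L.IsGenTime τ) {c d : ℝ} (hcd : c < d)
    (h : L.PastCausalOn γ c d) (hreg : ∀ u ∈ Icc c d, vel (n := n) γ c d u ≠ 0) :
    StrictAntiOn (τ ∘ γ) (Icc c d) := by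
  have hmono := hτ.2 _ c d (h.futureCausalOn_comp_reflect hcd) fun u hu => by
    rw [vel_comp_reflect hcd (h.1.mdifferentiableOn (by simp)) hu]
    exact neg_ne_zero.2 (hreg _ (reflect_mem_Icc hu))
  intro x hx y hy hxy
  simpa using hmono (reflect_mem_Icc hy) (reflect_mem_Icc hx) (by linarith)

namespace PWC

variable {a b : ℝ} (P : L.PWC γ a b)

theorem s_le_s {i l : ℕ} (hil : i ≤ l) (hl : l ≤ P.k) : P.s i ≤ P.s l := by
  induction l, hil using Nat.le_induction with
  | base => rfl
  | succ l _ ih => exact (ih (by omega)).trans (P.mono l (by omega)).le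

theorem s_mem_Icc {i : ℕ} (hi : i ≤ P.k) : P.s i ∈ Icc a b :=
  ⟨by simpa only [P.first] using P.s_le_s (Nat.zero_le i) hi,
    by simpa only [P.last] using P.s_le_s hi le_rfl⟩

theorem le (P : L.PWC γ a b) : a ≤ b :=
  nonempty_Icc.1 ⟨_, P.s_mem_Icc P.k.zero_le⟩

end PWC

section IsGenTime

variable {a b : ℝ} (P : L.PWC γ a b)

theorem IsGenTime.strictMonoOn_or_strictAntiOn (hτ : L.IsGenTime τ) {i : ℕ} (hi : i < P.k) :
    StrictMonoOn (τ ∘ γ) (Icc (P.s i) (P.s (i + 1))) ∨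
      StrictAntiOn (τ ∘ γ) (Icc (P.s i) (P.s (i + 1))) :=
  (P.causal i hi).imp (fun h => hτ.2 γ _ _ h (P.regular i hi))
    (fun h => hτ.strictAntiOn_of_pastCausalOn (P.mono i hi) h (P.regular i hi))

theorem IsGenTime.apply_s_succ_ne (hτ : L.IsGenTime τ) {i : ℕ} (hi : i < P.k) :
    τ (γ (P.s (i + 1))) ≠ τ (γ (P.s i)) := by
  have hleft := left_mem_Icc.2 (P.mono i hi).le
  have hright := right_mem_Icc.2 (P.mono i hi).le
  rcases hτ.strictMonoOn_or_strictAntiOn P hi with hmono | hanti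
  · exact (hmono hleft hright (P.mono i hi)).ne'
  · exact (hanti hleft hright (P.mono i hi)).ne

theorem IsGenTime.apply_s_le_apply_s_succ_iff (hτ : L.IsGenTime τ) {i : ℕ} (hi : i < P.k) :
    τ (γ (P.s i)) ≤ τ (γ (P.s (i + 1))) ↔ L.FutureCausalOn γ (P.s i) (P.s (i + 1)) := by
  have hleft := left_mem_Icc.2 (P.mono i hi).le
  have hright := right_mem_Icc.2 (P.mono i hi).le
  refine ⟨fun hle => (P.causal i hi).resolve_right fun hpast => ?_,
    fun hfut => hτ.1 γ _ _ hfut hleft hright (P.mono i hi).le⟩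
  exact hle.not_gt
    (hτ.strictAntiOn_of_pastCausalOn (P.mono i hi) hpast (P.regular i hi) hleft hright (P.mono i hi))

theorem IsGenTime.nullLength_eq_zero_iff (hτ : L.IsGenTime τ) :
    L.nullLength τ P = 0 ↔ ∀ u ∈ Icc a b, γ u = γ a := by
  rw [nullLength, sum_range_abs_sub_eq_zero_iff (m := fun i => τ (γ (P.s i)))]
  constructor
  · intro h u hu
    have hk : P.k = 0 := by
      by_contra hk
      exact hτ.apply_s_succ_ne P (Nat.pos_of_ne_zero hk) (h 0 (Nat.pos_of_ne_zero hk))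
    have hab : b = a := by simpa only [hk, P.first] using P.last.symm
    rw [le_antisymm (hab ▸ hu.2) hu.1]
  · intro h i hi
    simp only [h _ (P.s_mem_Icc hi), h _ (P.s_mem_Icc hi.le)]

theorem IsGenTime.nullLength_eq_sub_iff (hτ : L.IsGenTime τ) :
    L.nullLength τ P = τ (γ b) - τ (γ a) ↔ ∀ i < P.k, L.FutureCausalOn γ (P.s i) (P.s (i + 1)) := by
  have htel := sum_range_abs_sub_eq_sub_iff (m := fun i => τ (γ (P.s i))) (k := P.k)
  simp only [P.first, P.last] at htel
  rw [nullLength, htel]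
  exact forall₂_congr fun i hi => hτ.apply_s_le_apply_s_succ_iff P hi

theorem IsGenTime.sub_le_nullLength (hτ : L.IsGenTime τ) {u v : ℝ} (hu : u ∈ Icc a b)
    (hv : v ∈ Icc a b) : τ (γ u) - τ (γ v) ≤ L.nullLength τ P := by
  simp only [← P.first, ← P.last] at hu hv
  exact sub_le_sum_range_abs_sub_of_piecewise_monotone (f := τ ∘ γ)
    (fun i hi => (P.mono i hi).le)
    (fun i hi => (hτ.strictMonoOn_or_strictAntiOn P hi).imp StrictMonoOn.monotoneOn
      StrictAntiOn.antitoneOn) hu hv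

end IsGenTime

/-- Basic properties of the null length of a piecewise causal
curve `β` from `p` to `q`, for a generalized time function `τ`:
(1) `L̂_τ(β) = 0` iff `β` is trivial (constant);
(2) `L̂_τ(β) = τ(q) − τ(p)` iff `β` is future causal (every piece is);
(3) `L̂_τ(β) ≥ max_{y∈β} τ(y) − min_{x∈β} τ(x) ≥ |τ(q) − τ(p)|`. -/
theorem nullLength_basic_properties {n : ℕ} {M : Type*} [TopologicalSpace M]
    [ChartedSpace (EuclideanSpace ℝ (Fin (n + 1))) M]
    [IsManifold (𝓡 (n + 1)) (⊤ : ℕ∞) M]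
    (L : SpacetimeMetric n M) (τ : M → ℝ) (hτ : L.IsGenTime τ)
    (γ : ℝ → M) (a b : ℝ) (P : L.PWC γ a b) (p q : M)
    (hp : γ a = p) (hq : γ b = q) :
    (L.nullLength τ P = 0 ↔ ∀ s ∈ Icc a b, γ s = p) ∧
    (L.nullLength τ P = τ q - τ p ↔
      ∀ i < P.k, L.FutureCausalOn γ (P.s i) (P.s (i + 1))) ∧
    ((∀ u ∈ Icc a b, ∀ v ∈ Icc a b, τ (γ u) - τ (γ v) ≤ L.nullLength τ P) ∧
      |τ q - τ p| ≤ L.nullLength τ P) := by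
  subst hp hq
  have ha := left_mem_Icc.2 P.le
  have hb := right_mem_Icc.2 P.le
  exact ⟨hτ.nullLength_eq_zero_iff P, hτ.nullLength_eq_sub_iff P,
    fun u hu v hv => hτ.sub_le_nullLength P hu hv,
    abs_sub_le_iff.2 ⟨hτ.sub_le_nullLength P hb ha, hτ.sub_le_nullLength P ha hb⟩⟩

end SpacetimeMetric

end NullDist
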